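/- arXiv:1711.07567 — 3 statements merged into one kernel-verified Lean document; each statement's English description precedes it below -/
import Mathlib

section
/- Let n ≥ 16, let G = ([n], E) be a simple undirected graph, let S, V ⊆ [n] be disjoint with m(S,V) > 0, and let m̃ > 0. Consider the procedure CheckEstimate(S, V, m̃): for each i = 0, 1, …, ⌊log n⌋ (independently across iterations), sample S'_i ⊆ S by including each vertex of S independently with probability min(2^i/m̃, 1) and sample V'_i ⊆ V by including each vertex of V independently with probability 1/2^i, and accept if m(S'_i, V'_i) ≠ 0 for some i. If m̃ ≥ 4·m(S,V)·(log n + 1), then CheckEstimate(S, V, m̃) accepts with probability at most 1/4. -/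
open MeasureTheory Finset
open scoped ENNReal NNReal

/- `mSV G S V` is the number of edges of `G` with one endpoint in `S` and the
other in `V` (for disjoint `S`, `V`). -/
open scoped Classical in
noncomputable def mSV {n : ℕ} (G : SimpleGraph (Fin n)) (S V : Finset (Fin n)) : ℕ :=
  (Finset.univ.filter fun p : Fin n × Fin n => G.Adj p.1 p.2 ∧ p.1 ∈ S ∧ p.2 ∈ V).card

/-- Bernoulli measure on `Bool` with success probability `min p 1`. -/
noncomputable def bern (p : ℝ≥0∞) : Measure Bool :=
  (PMF.bernoulli (min p 1).toNNReal
    (by simpa using ENNReal.toNNReal_mono ENNReal.one_ne_top (min_le_right p 1))).toMeasure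

/-- `n` independent Bernoulli(`min p 1`) bits. -/
noncomputable def bits (n : ℕ) (p : ℝ≥0∞) : Measure (Fin n → Bool) :=
  Measure.pi fun _ => bern p

/- The randomness of one iteration `i` of `CheckEstimate` with guess `mt`:
independently include each vertex in the `S`-side sample with probability
`min(2^i/mt, 1)` and in the `V`-side sample with probability `1/2^i`. -/
noncomputable def pairM (n : ℕ) (mt : ℝ) (i : ℕ) :
    Measure ((Fin n → Bool) × (Fin n → Bool)) :=
  (bits n (ENNReal.ofReal (2 ^ i / mt))).prod (bits n ((2 ^ i : ℝ≥0∞))⁻¹)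

/-- The random subset of `S` selected by the inclusion indicators `σ`. -/
def sub {n : ℕ} (S : Finset (Fin n)) (σ : Fin n → Bool) : Finset (Fin n) :=
  S.filter fun v => σ v = true

/- The randomness of a full run of `CheckEstimate(S, V, mt)`: one independent
sampling pair for each iteration `i = 0, 1, …, ⌊log₂ n⌋`. -/
noncomputable def ceM (n : ℕ) (mt : ℝ) :
    Measure (Fin (Nat.log 2 n + 1) → (Fin n → Bool) × (Fin n → Bool)) :=
  Measure.pi fun i => pairM n mt (i : ℕ)

/-- `CheckEstimate(S, V, mt)` accepts on randomness `ω` iff for some iteration `i`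
the sampled pair `(S'_i, V'_i)` has an edge between its sides. -/
def ceAccepts {n : ℕ} (G : SimpleGraph (Fin n)) (S V : Finset (Fin n))
    (ω : Fin (Nat.log 2 n + 1) → (Fin n → Bool) × (Fin n → Bool)) : Prop :=
  ∃ i, mSV G (sub S (ω i).1) (sub V (ω i).2) ≠ 0

/-! Union bound: in each iteration `i` a fixed edge `(u, v)` with `u ∈ S`, `v ∈ V` survives
the sampling with probability at most `(2^i / m̃) · 2^(-i) = 1 / m̃`, so a single iteration
accepts with probability at most `m(S,V) / m̃`, and all `⌊log n⌋ + 1` iterations together with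
probability at most `(⌊log n⌋ + 1) · m(S,V) / m̃ ≤ 1/4`. -/

instance bern.instIsProbabilityMeasure (p : ℝ≥0∞) : IsProbabilityMeasure (bern p) := by
  unfold bern; infer_instance

instance bits.instIsProbabilityMeasure (n : ℕ) (p : ℝ≥0∞) :
    IsProbabilityMeasure (bits n p) := by
  unfold bits; infer_instance

instance pairM.instIsProbabilityMeasure (n : ℕ) (mt : ℝ) (i : ℕ) :
    IsProbabilityMeasure (pairM n mt i) := by
  unfold pairM; infer_instance

lemma bern_singleton_true_le (p : ℝ≥0∞) : bern p {true} ≤ p := by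
  rw [bern, PMF.toMeasure_apply_singleton _ _ (measurableSet_singleton _)]
  refine (PMF.bernoulli_apply (b := true) _).trans_le ?_
  rw [cond_true, ENNReal.coe_toNNReal (min_le_right p 1 |>.trans_lt ENNReal.one_lt_top).ne]
  exact min_le_left p 1

lemma bits_setOf_apply_true_le (n : ℕ) (p : ℝ≥0∞) (u : Fin n) :
    bits n p {σ | σ u = true} ≤ p :=
  calc bits n p (Function.eval u ⁻¹' {true})
      = bern p {true} := (measurePreserving_eval _ u).measure_preimage
        MeasurableSet.of_discrete.nullMeasurableSet
    _ ≤ p := bern_singleton_true_le p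

lemma pairM_setOf_apply_true_le (n : ℕ) {mt : ℝ} (hmt : 0 < mt) (i : ℕ) (u v : Fin n) :
    pairM n mt i {p | p.1 u = true ∧ p.2 v = true} ≤ (ENNReal.ofReal mt)⁻¹ := by
  have h2i : ENNReal.ofReal (2 ^ i) = 2 ^ i := by simp [ENNReal.ofReal_pow]
  change pairM n mt i ({σ | σ u = true} ×ˢ {τ | τ v = true}) ≤ _
  rw [pairM, Measure.prod_prod]
  calc bits n (ENNReal.ofReal (2 ^ i / mt)) {σ | σ u = true} *
        bits n (2 ^ i)⁻¹ {τ | τ v = true}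
      ≤ ENNReal.ofReal (2 ^ i / mt) * (2 ^ i)⁻¹ := by
        gcongr <;> exact bits_setOf_apply_true_le ..
    _ = (ENNReal.ofReal mt)⁻¹ := by
        rw [ENNReal.ofReal_div_of_pos hmt, h2i, div_eq_mul_inv, mul_right_comm,
          ENNReal.mul_inv_cancel (by simp) (by simp), one_mul]

lemma measure_setOf_mSV_sub_ne_zero_le {n : ℕ} (μ : Measure ((Fin n → Bool) × (Fin n → Bool)))
    {c : ℝ≥0∞} (hμ : ∀ u v, μ {p | p.1 u = true ∧ p.2 v = true} ≤ c)
    (G : SimpleGraph (Fin n)) (S V : Finset (Fin n)) :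
    μ {p | mSV G (sub S p.1) (sub V p.2) ≠ 0} ≤ mSV G S V * c := by
  classical
  set E := univ.filter fun e : Fin n × Fin n => G.Adj e.1 e.2 ∧ e.1 ∈ S ∧ e.2 ∈ V
  have hcover : {p : (Fin n → Bool) × (Fin n → Bool) | mSV G (sub S p.1) (sub V p.2) ≠ 0} ⊆
      ⋃ e ∈ E, {p | p.1 e.1 = true ∧ p.2 e.2 = true} := by
    intro p hp
    obtain ⟨e, he⟩ := Finset.card_ne_zero.mp hp
    simp only [sub, mem_filter, mem_univ, true_and] at he
    obtain ⟨hadj, ⟨heS, he1⟩, ⟨heV, he2⟩⟩ := he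
    exact Set.mem_biUnion (show e ∈ E by simp [E, hadj, heS, heV]) ⟨he1, he2⟩
  calc μ {p | mSV G (sub S p.1) (sub V p.2) ≠ 0}
      ≤ ∑ e ∈ E, μ {p | p.1 e.1 = true ∧ p.2 e.2 = true} :=
        (measure_mono hcover).trans (measure_biUnion_finset_le E _)
    _ ≤ ∑ _e ∈ E, c := sum_le_sum fun e _ => hμ e.1 e.2
    _ = mSV G S V * c := by rw [sum_const, nsmul_eq_mul]; rfl

lemma ceM_setOf_ceAccepts_le {n : ℕ} {mt : ℝ} (hmt : 0 < mt) (G : SimpleGraph (Fin n))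
    (S V : Finset (Fin n)) :
    ceM n mt {ω | ceAccepts G S V ω}
      ≤ (Nat.log 2 n + 1 : ℕ) * (mSV G S V * (ENNReal.ofReal mt)⁻¹) := by
  set B := {p : (Fin n → Bool) × (Fin n → Bool) | mSV G (sub S p.1) (sub V p.2) ≠ 0}
  have hunion : {ω | ceAccepts G S V ω} = ⋃ i, Function.eval i ⁻¹' B := by
    ext ω; simp [ceAccepts, B]
  calc ceM n mt {ω | ceAccepts G S V ω}
      ≤ ∑ i, ceM n mt (Function.eval i ⁻¹' B) := hunion ▸ measure_iUnion_fintype_le _ _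
    _ = ∑ i : Fin (Nat.log 2 n + 1), pairM n mt i B := by
        refine sum_congr rfl fun i _ => ?_
        exact (measurePreserving_eval _ i).measure_preimage
          MeasurableSet.of_discrete.nullMeasurableSet
    _ ≤ ∑ _i : Fin (Nat.log 2 n + 1), mSV G S V * (ENNReal.ofReal mt)⁻¹ :=
        sum_le_sum fun i _ =>
          measure_setOf_mSV_sub_ne_zero_le _ (pairM_setOf_apply_true_le n hmt i) G S V
    _ = (Nat.log 2 n + 1 : ℕ) * (mSV G S V * (ENNReal.ofReal mt)⁻¹) := by
        rw [sum_const, card_univ, Fintype.card_fin, nsmul_eq_mul]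

theorem stmt9_general (n : ℕ) (G : SimpleGraph (Fin n)) (S V : Finset (Fin n))
    (mt : ℝ) (hmt : 0 < mt)
    (h : 4 * (mSV G S V : ℝ) * (Real.logb 2 n + 1) ≤ mt) :
    ceM n mt {ω | ceAccepts G S V ω} ≤ 1 / 4 := by
  set N := Nat.log 2 n + 1
  set m := mSV G S V
  have hN : (N : ℝ) ≤ Real.logb 2 n + 1 := by
    have := Real.natLog_le_logb n 2
    push_cast [N] at this ⊢; linarith
  have hreal : N * m / mt ≤ (1 / 4 : ℝ) := by
    rw [div_le_iff₀ hmt]; nlinarith [(m.cast_nonneg : (0 : ℝ) ≤ m)]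
  calc ceM n mt {ω | ceAccepts G S V ω}
      ≤ N * (m * (ENNReal.ofReal mt)⁻¹) := ceM_setOf_ceAccepts_le hmt G S V
    _ = ENNReal.ofReal (N * m / mt) := by
        rw [ENNReal.ofReal_div_of_pos hmt, ENNReal.ofReal_mul (by positivity), div_eq_mul_inv,
          mul_assoc]
        simp
    _ ≤ ENNReal.ofReal (1 / 4) := ENNReal.ofReal_le_ofReal hreal
    _ = 1 / 4 := by rw [ENNReal.ofReal_div_of_pos four_pos]; simp

/-- Let `n ≥ 16`, let `S, V ⊆ [n]` be disjoint with `m(S,V) > 0`, and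
let `m̃ > 0`. If `m̃ ≥ 4·m(S,V)·(log₂ n + 1)`, then `CheckEstimate(S, V, m̃)` accepts
with probability at most `1/4`. -/
theorem stmt9 (n : ℕ) (hn : 16 ≤ n) (G : SimpleGraph (Fin n)) (S V : Finset (Fin n))
    (hSV : Disjoint S V) (hm : 0 < mSV G S V) (mt : ℝ) (hmt : 0 < mt)
    (h : 4 * (mSV G S V : ℝ) * (Real.logb 2 n + 1) ≤ mt) :
    ceM n mt {ω | ceAccepts G S V ω} ≤ 1 / 4 :=
  stmt9_general n G S V mt hmt h
end

section
/- Let n ≥ 16, let G = ([n], E) be a simple undirected graph, let S, V ⊆ [n] be disjoint with m(S,V) > 0, and let m̃ > 0. If m̃ ≤ m(S,V)/(4 log n), then CheckEstimate(S, V, m̃) accepts with probability at least 1/2. -/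
open MeasureTheory Finset
open scoped ENNReal NNReal

/-!
Sort the vertices `u ∈ S` by the dyadic scale `2 ^ j ≤ deg_V u < 2 ^ (j + 1)` of their number of
neighbours in `V`. One of the `⌊log n⌋ + 1 ≤ (5/4) log n` scales carries at least
`m(S,V) / ((5/4) log n) ≥ (16/5) m̃` edges, so its class `T` satisfies `|T| 2 ^ (j + 1) ≥ (16/5) m̃`.
In round `j` the `S`-sample meets `T` with probability at least
`1 - exp(-2 ^ j |T| / m̃) ≥ 1 - e^(-8/5)`, and once it contains some `u ∈ T`, the `V`-sample meets
the `≥ 2 ^ j` neighbours of `u` with probability at least `1 - e^(-1)`.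
Numerically `(1 - e^(-1)) (1 - e^(-8/5)) ≥ 1/2`.
-/

lemma one_sub_min_pow_le_exp_neg (r : ℝ) (k : ℕ) :
    (1 - min r 1) ^ k ≤ Real.exp (-(r * k)) := by
  rcases le_or_gt r 1 with hr1 | hr1
  · rw [min_eq_left hr1, show -(r * k) = k * -r by ring, Real.exp_nat_mul]
    exact pow_le_pow_left₀ (by linarith) (Real.one_sub_le_exp_neg r) k
  · rw [min_eq_right hr1.le, sub_self]
    rcases Nat.eq_zero_or_pos k with rfl | hk
    · simp
    · rw [zero_pow hk.ne']
      positivity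

lemma four_le_logb_two {n : ℕ} (hn : 16 ≤ n) : 4 ≤ Real.logb 2 n := by
  calc (4 : ℝ) = Real.logb 2 16 := by
        rw [show (16 : ℝ) = 2 ^ (4 : ℕ) by norm_num, Real.logb_pow,
          Real.logb_self_eq_one one_lt_two, mul_one, Nat.cast_ofNat]
    _ ≤ Real.logb 2 n := Real.logb_le_logb_of_le one_lt_two (by norm_num) (by exact_mod_cast hn)

lemma half_le_one_sub_exp_mul_one_sub_exp :
    1 / 2 ≤ (1 - Real.exp (-1)) * (1 - Real.exp (-(8 / 5))) := by
  -- `e^(8/5) = e · e^(3/5) ≥ 2.718 · 1.78 > 4.8`, and `(1 - 1/2.718) (1 - 1/4.8) > 0.5004`.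
  have he : 2.7182818283 < Real.exp 1 := Real.exp_one_gt_d9
  have he' : 1 + 3 / 5 + (3 / 5) ^ 2 / 2 ≤ Real.exp (3 / 5) :=
    Real.quadratic_le_exp_of_nonneg (by norm_num)
  have h85 : Real.exp 1 * Real.exp (3 / 5) = Real.exp (8 / 5) := by
    rw [← Real.exp_add]; norm_num
  rw [Real.exp_neg, Real.exp_neg]
  have hpos := Real.exp_pos 1
  have hpos' := Real.exp_pos (8 / 5)
  rw [← h85]
  field_simp
  nlinarith

lemma half_le_ofReal_one_sub_exp_mul_one_sub_exp {c : ℝ} (hc : 8 / 5 ≤ c) :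
    1 / 2 ≤ ENNReal.ofReal ((1 - Real.exp (-1)) * (1 - Real.exp (-c))) := by
  calc (1 / 2 : ℝ≥0∞) = ENNReal.ofReal (1 / 2) := by
        rw [ENNReal.ofReal_div_of_pos two_pos, ENNReal.ofReal_one, ENNReal.ofReal_ofNat]
    _ ≤ ENNReal.ofReal ((1 - Real.exp (-1)) * (1 - Real.exp (-(8 / 5)))) :=
      ENNReal.ofReal_le_ofReal half_le_one_sub_exp_mul_one_sub_exp
    _ ≤ ENNReal.ofReal ((1 - Real.exp (-1)) * (1 - Real.exp (-c))) := by
      gcongr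
      exact sub_nonneg.2 (Real.exp_le_one_iff.2 (by norm_num))

instance (p : ℝ≥0∞) : IsProbabilityMeasure (bern p) := PMF.toMeasure.isProbabilityMeasure _

instance (n : ℕ) (p : ℝ≥0∞) : IsProbabilityMeasure (bits n p) := by
  unfold bits; infer_instance

instance (n : ℕ) (mt : ℝ) (i : ℕ) : IsProbabilityMeasure (pairM n mt i) := by
  unfold pairM; infer_instance

lemma bern_false (p : ℝ≥0∞) : bern p {false} = 1 - min p 1 := by
  rw [bern, PMF.toMeasure_apply_singleton _ _ (measurableSet_singleton _)]
  refine (PMF.bernoulli_apply _ false).trans ?_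
  rw [Bool.cond_false, ENNReal.coe_sub, ENNReal.coe_toNNReal (by simp), ENNReal.coe_one]

lemma bits_forall_false {n : ℕ} (p : ℝ≥0∞) (W : Finset (Fin n)) :
    bits n p {σ | ∀ v ∈ W, σ v = false} = (1 - min p 1) ^ #W := by
  classical
  have hpi : {σ : Fin n → Bool | ∀ v ∈ W, σ v = false} =
      Set.univ.pi fun v => if v ∈ W then {false} else Set.univ := by
    ext σ
    simp only [Set.mem_ofPred_eq, Set.mem_univ_pi]
    refine forall_congr' fun v => ?_
    split_ifs with hv <;> simp [hv]
  rw [hpi, bits, Measure.pi_pi]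
  simp_rw [apply_ite (bern p), measure_univ, bern_false]
  rw [prod_ite_mem, univ_inter, prod_const]

lemma ofReal_one_sub_exp_le_bits_exists_true {n : ℕ} {r : ℝ} (hr : 0 ≤ r) (W : Finset (Fin n)) :
    ENNReal.ofReal (1 - Real.exp (-(r * #W))) ≤
      bits n (ENNReal.ofReal r) {σ | ∃ v ∈ W, σ v = true} := by
  have hcompl : {σ : Fin n → Bool | ∃ v ∈ W, σ v = true} =
      {σ | ∀ v ∈ W, σ v = false}ᶜ := by
    ext σ; simp
  have hmiss : bits n (ENNReal.ofReal r) {σ | ∀ v ∈ W, σ v = false} =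
      ENNReal.ofReal ((1 - min r 1) ^ #W) := by
    rw [bits_forall_false, ← ENNReal.ofReal_one, ← ENNReal.ofReal_min,
      ← ENNReal.ofReal_sub _ (le_min hr zero_le_one), ENNReal.ofReal_pow (by simp)]
  rw [hcompl, prob_compl_eq_one_sub (Set.to_countable _).measurableSet, hmiss,
    ← ENNReal.ofReal_one, ← ENNReal.ofReal_sub _ (pow_nonneg (sub_nonneg.2 (min_le_right _ _)) _)]
  exact ENNReal.ofReal_le_ofReal (by linarith [one_sub_min_pow_le_exp_neg r #W])

lemma mul_le_prod_apply_of_le_measure_slice {X Y : Type*} [MeasurableSpace X]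
    [MeasurableSpace Y] (μ : Measure X) (ν : Measure Y) [SFinite ν] {A : Set (X × Y)}
    (hA : MeasurableSet A) {H : Set X} (hH : MeasurableSet H) {c : ℝ≥0∞}
    (hc : ∀ x ∈ H, c ≤ ν (Prod.mk x ⁻¹' A)) :
    c * μ H ≤ μ.prod ν A := by
  rw [Measure.prod_apply hA, ← lintegral_indicator_const hH c]
  refine lintegral_mono fun x => ?_
  by_cases hx : x ∈ H
  · simpa [hx] using hc x hx
  · simp [hx]

lemma exists_dyadic_level {α : Type*} (s : Finset α) (d : α → ℕ) {N : ℕ}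
    (hd : ∀ u ∈ s, d u ≤ N) :
    ∃ j ≤ Nat.log 2 N, ∃ t ⊆ s, (∀ u ∈ t, 2 ^ j ≤ d u) ∧
      (∑ u ∈ s, d u : ℝ) ≤ (Nat.log 2 N + 1) * (#t * 2 ^ (j + 1)) := by
  classical
  set s' := s.filter (d · ≠ 0)
  have hmaps : ∀ u ∈ s', Nat.log 2 (d u) ∈ range (Nat.log 2 N + 1) := fun u hu =>
    mem_range.2 (Nat.lt_succ_of_le (Nat.log_mono_right (hd u (mem_filter.1 hu).1)))
  have htotal : #(range (Nat.log 2 N + 1)) • ((∑ u ∈ s, d u : ℝ) / (Nat.log 2 N + 1)) ≤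
      ∑ u ∈ s', (d u : ℝ) := by
    rw [card_range, nsmul_eq_mul, Nat.cast_add_one, mul_div_cancel₀ _ (by positivity),
      sum_filter_of_ne fun u _ hu => by exact_mod_cast hu]
  obtain ⟨j, hj, hle⟩ :=
    exists_le_sum_fiber_of_maps_to_of_nsmul_le_sum hmaps nonempty_range_add_one htotal
  refine ⟨j, Nat.lt_succ_iff.1 (mem_range.1 hj), {u ∈ s' | Nat.log 2 (d u) = j},
    (filter_subset _ _).trans (filter_subset _ _), fun u hu => ?_, ?_⟩
  · simp only [s', mem_filter] at hu
    obtain ⟨⟨-, hu0⟩, rfl⟩ := hu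
    exact Nat.pow_log_le_self 2 hu0
  · rw [div_le_iff₀' (by positivity)] at hle
    refine hle.trans (mul_le_mul_of_nonneg_left ?_ (by positivity))
    rw [← nsmul_eq_mul]
    refine sum_le_card_nsmul _ _ _ fun u hu => ?_
    obtain ⟨-, rfl⟩ := mem_filter.1 hu
    exact_mod_cast (Nat.lt_pow_succ_log_self one_lt_two (d u)).le

open scoped Classical in
lemma mSV_eq_sum_card_adj {n : ℕ} (G : SimpleGraph (Fin n)) (S V : Finset (Fin n)) :
    mSV G S V = ∑ u ∈ S, #(V.filter (G.Adj u)) := by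
  rw [mSV, card_filter, Fintype.sum_prod_type]
  refine (sum_subset (subset_univ S) fun u _ hu => ?_).symm.trans (sum_congr rfl fun u hu => ?_)
  · simp [hu]
  · rw [← card_filter]
    congr 1
    ext v
    simp [hu, and_comm]

lemma mSV_ne_zero_of_adj {n : ℕ} {G : SimpleGraph (Fin n)} {S V : Finset (Fin n)}
    {u v : Fin n} (hu : u ∈ S) (hv : v ∈ V) (huv : G.Adj u v) : mSV G S V ≠ 0 := by
  classical
  exact card_ne_zero_of_mem (a := (u, v)) (by simp [hu, hv, huv])

def roundAccepts {n : ℕ} (G : SimpleGraph (Fin n)) (S V : Finset (Fin n)) :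
    Set ((Fin n → Bool) × (Fin n → Bool)) :=
  {x | mSV G (sub S x.1) (sub V x.2) ≠ 0}

open scoped Classical in
lemma le_pairM_roundAccepts {n : ℕ} {G : SimpleGraph (Fin n)} {S T : Finset (Fin n)}
    (V : Finset (Fin n)) (hTS : T ⊆ S) {j : ℕ}
    (hdeg : ∀ u ∈ T, 2 ^ j ≤ #(V.filter (G.Adj u))) {mt : ℝ} (hmt : 0 ≤ mt) :
    ENNReal.ofReal ((1 - Real.exp (-1)) * (1 - Real.exp (-(2 ^ j / mt * #T)))) ≤
      pairM n mt j (roundAccepts G S V) := by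
  have hinv : ((2 : ℝ≥0∞) ^ j)⁻¹ = ENNReal.ofReal (2 ^ j)⁻¹ := by
    rw [ENNReal.ofReal_inv_of_pos (by positivity), ENNReal.ofReal_pow zero_le_two,
      ENNReal.ofReal_ofNat]
  have hslice : ∀ σ ∈ {σ : Fin n → Bool | ∃ u ∈ T, σ u = true},
      ENNReal.ofReal (1 - Real.exp (-1)) ≤
        bits n ((2 : ℝ≥0∞) ^ j)⁻¹ (Prod.mk σ ⁻¹' roundAccepts G S V) := by
    rintro σ ⟨u, huT, hσu⟩
    have hnbr : {τ : Fin n → Bool | ∃ v ∈ V.filter (G.Adj u), τ v = true} ⊆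
        Prod.mk σ ⁻¹' roundAccepts G S V := by
      rintro τ ⟨v, hv, hτv⟩
      rw [mem_filter] at hv
      exact mSV_ne_zero_of_adj (mem_filter.2 ⟨hTS huT, hσu⟩) (mem_filter.2 ⟨hv.1, hτv⟩) hv.2
    have hrate : 1 ≤ (2 ^ j)⁻¹ * (#(V.filter (G.Adj u)) : ℝ) := by
      rw [le_inv_mul_iff₀ (by positivity), mul_one]
      exact_mod_cast hdeg u huT
    calc ENNReal.ofReal (1 - Real.exp (-1))
        ≤ ENNReal.ofReal (1 - Real.exp (-((2 ^ j)⁻¹ * #(V.filter (G.Adj u))))) :=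
          ENNReal.ofReal_le_ofReal (by gcongr)
      _ ≤ _ := ofReal_one_sub_exp_le_bits_exists_true (by positivity) _
      _ ≤ _ := by rw [hinv]; exact measure_mono hnbr
  calc ENNReal.ofReal ((1 - Real.exp (-1)) * (1 - Real.exp (-(2 ^ j / mt * #T))))
      = ENNReal.ofReal (1 - Real.exp (-1)) *
          ENNReal.ofReal (1 - Real.exp (-(2 ^ j / mt * #T))) :=
        ENNReal.ofReal_mul (sub_nonneg.2 (Real.exp_le_one_iff.2 (by norm_num)))
    _ ≤ ENNReal.ofReal (1 - Real.exp (-1)) *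
          bits n (ENNReal.ofReal (2 ^ j / mt)) {σ | ∃ u ∈ T, σ u = true} := by
        gcongr
        exact ofReal_one_sub_exp_le_bits_exists_true (by positivity) T
    _ ≤ _ := mul_le_prod_apply_of_le_measure_slice _ _ (Set.to_countable _).measurableSet
        (Set.to_countable _).measurableSet hslice

theorem stmt10_general (n : ℕ) (hn : 16 ≤ n) (G : SimpleGraph (Fin n)) (S V : Finset (Fin n))
    (mt : ℝ) (hmt : 0 < mt)
    (h : mt ≤ (mSV G S V : ℝ) / (4 * Real.logb 2 n)) :
    1 / 2 ≤ ceM n mt {ω | ceAccepts G S V ω} := by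
  classical
  obtain ⟨j, hj, T, hTS, hdeg, hm⟩ := exists_dyadic_level S (fun u => #(V.filter (G.Adj u)))
    (N := n) fun u _ => (card_filter_le _ _).trans ((card_le_univ V).trans_eq (Fintype.card_fin n))
  rw [← Nat.cast_sum, ← mSV_eq_sum_card_adj] at hm
  have hrate : 8 / 5 ≤ 2 ^ j / mt * #T := by
    have hL := four_le_logb_two hn
    have hlog : (Nat.log 2 n : ℝ) ≤ Real.logb 2 n := Real.natLog_le_logb n 2
    set L := Real.logb 2 n
    rw [le_div_iff₀ (by positivity)] at h
    have hgrowth : L * (4 * mt) ≤ L * (5 / 2 * (2 ^ j * #T)) := calc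
      L * (4 * mt) ≤ mSV G S V := by linarith
      _ ≤ (Nat.log 2 n + 1) * (#T * 2 ^ (j + 1)) := hm
      _ = 2 * (Nat.log 2 n + 1) * (2 ^ j * #T) := by ring
      _ ≤ 2 * (5 / 4 * L) * (2 ^ j * #T) := by gcongr; linarith
      _ = L * (5 / 2 * (2 ^ j * #T)) := by ring
    have := le_of_mul_le_mul_left hgrowth (by linarith)
    rw [div_mul_eq_mul_div, le_div_iff₀ hmt]
    linarith
  calc (1 / 2 : ℝ≥0∞)
      ≤ ENNReal.ofReal ((1 - Real.exp (-1)) * (1 - Real.exp (-(2 ^ j / mt * #T)))) :=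
        half_le_ofReal_one_sub_exp_mul_one_sub_exp hrate
    _ ≤ pairM n mt j (roundAccepts G S V) := le_pairM_roundAccepts V hTS hdeg hmt.le
    _ = ceM n mt (Function.eval ⟨j, Nat.lt_succ_of_le hj⟩ ⁻¹' roundAccepts G S V) := by
      rw [ceM, (measurePreserving_eval _ _).measure_preimage
        (Set.to_countable _).measurableSet.nullMeasurableSet]
    _ ≤ ceM n mt {ω | ceAccepts G S V ω} := measure_mono fun ω hω => ⟨_, hω⟩

/-- Let `n ≥ 16`, let `S, V ⊆ [n]` be disjoint with `m(S,V) > 0`,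
and let `m̃ > 0`. If `m̃ ≤ m(S,V)/(4·log₂ n)`, then `CheckEstimate(S, V, m̃)` accepts
with probability at least `1/2`. -/
theorem stmt10 (n : ℕ) (hn : 16 ≤ n) (G : SimpleGraph (Fin n)) (S V : Finset (Fin n))
    (hSV : Disjoint S V) (hm : 0 < mSV G S V) (mt : ℝ) (hmt : 0 < mt)
    (h : mt ≤ (mSV G S V : ℝ) / (4 * Real.logb 2 n)) :
    1 / 2 ≤ ceM n mt {ω | ceAccepts G S V ω} :=
  stmt10_general n hn G S V mt hmt h
end

section
/- Let U = {x_1, …, x_r} be a finite list of real numbers, all contained in the interval [α/b, α·b], for some α > 0 and b ≥ 1, and let Γ = Σ_{i=1}^{r} x_i. Let γ, ε > 0 and let t be any integer with t ≥ (b^4/(2ε^2))·(1 + ln(1/γ)). For i = 1, …, t let X_i be chosen independently and uniformly at random from U, and set Y = (r/t)·Σ_{i=1}^{t} X_i. Then Pr[ |Y − Γ| ≥ ε·Γ ] ≤ γ. -/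
/-!
Writing `Y - Γ = (r / t) ∑ᵢ (x_{ωᵢ} - Γ / r)`, the summands are independent, centred and take
values in an interval of length `α b` (all `x_j` lie in `[0, α b]`), so Hoeffding's inequality gives
`Pr[|Y - Γ| ≥ ε Γ] ≤ 2 exp (-2 ε² Γ² t / (r² α² b²))`. As `Γ / r ≥ α / b`, the exponent is at least
`2 ε² t / b⁴ ≥ 1 + ln (1 / γ)`, and `2 / e ≤ 1`.
-/

open MeasureTheory Finset
open scoped ENNReal NNReal

noncomputable def unifM (α : Type*) [Fintype α] [MeasurableSpace α] : Measure α :=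
  (Fintype.card α : ℝ≥0∞)⁻¹ • Measure.count

open ProbabilityTheory Real

instance {α : Type*} [Fintype α] [MeasurableSpace α] [Nonempty α] :
    IsProbabilityMeasure (unifM α) :=
  ⟨by simp [unifM, ENNReal.inv_mul_cancel]⟩

section
variable {α : Type*} [Fintype α] [MeasurableSpace α] [MeasurableSingletonClass α]

lemma unifM_singleton (a : α) : unifM α {a} = (Fintype.card α : ℝ≥0∞)⁻¹ := by
  simp [unifM]

lemma integral_unifM [Nonempty α] (f : α → ℝ) :
    ∫ a, f a ∂unifM α = (∑ a, f a) / Fintype.card α := by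
  rw [integral_fintype (.of_finite), Finset.sum_div]
  simp [measureReal_def, unifM_singleton, div_eq_inv_mul]

lemma unifM_pi (ι : Type*) [Fintype ι] [DecidableEq ι] [Nonempty α] :
    unifM (ι → α) = Measure.pi fun _ ↦ unifM α := by
  refine Measure.ext_iff_singleton.2 fun ω ↦ ?_
  simp [unifM_singleton, ENNReal.inv_pow]

end

section
variable {ι α : Type*} [Fintype ι] [DecidableEq ι] [Fintype α] [Nonempty α] [MeasurableSpace α]
  [MeasurableSingletonClass α]

lemma measureReal_unifM_pi_sum_sub_ge_le {A B : ℝ} (f : α → ℝ) (hf : ∀ a, f a ∈ Set.Icc A B)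
    {ε : ℝ} (hε : 0 ≤ ε) :
    (unifM (ι → α)).real {ω | ε ≤ ∑ i, (f (ω i) - ∫ a, f a ∂unifM α)} ≤
      exp (-(2 * ε ^ 2 / (Fintype.card ι * (B - A) ^ 2))) := by
  have hsubgaussian :
      HasSubgaussianMGF (fun a ↦ f a - ∫ a, f a ∂unifM α) ((‖B - A‖₊ / 2) ^ 2) (unifM α) :=
    hasSubgaussianMGF_of_mem_Icc .of_discrete (ae_of_all _ hf)
  have hhoeffding := HasSubgaussianMGF.measure_sum_ge_le_of_iIndepFun
    (μ := Measure.pi fun _ : ι ↦ unifM α)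
    (X := fun i ω ↦ f (ω i) - ∫ a, f a ∂unifM α) (s := univ)
    (iIndepFun_pi (X := fun _ a ↦ f a - ∫ a, f a ∂unifM α) fun _ ↦ .of_discrete)
    (fun i _ ↦ HasSubgaussianMGF.of_map (measurable_pi_apply i).aemeasurable
      (by rwa [(measurePreserving_eval (fun _ : ι ↦ unifM α) i).map_eq])) hε
  rw [unifM_pi]
  refine hhoeffding.trans_eq (congrArg exp ?_)
  simp only [sum_const, card_univ, nsmul_eq_mul, NNReal.coe_mul, NNReal.coe_natCast,
    NNReal.coe_pow, NNReal.coe_div, coe_nnnorm, Real.norm_eq_abs, NNReal.coe_ofNat, div_pow, sq_abs]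
  field_simp

lemma measureReal_unifM_pi_abs_sum_sub_ge_le {A B : ℝ} (f : α → ℝ) (hf : ∀ a, f a ∈ Set.Icc A B)
    {ε : ℝ} (hε : 0 ≤ ε) :
    (unifM (ι → α)).real {ω | ε ≤ |∑ i, (f (ω i) - ∫ a, f a ∂unifM α)|} ≤
      2 * exp (-(2 * ε ^ 2 / (Fintype.card ι * (B - A) ^ 2))) := by
  have hneg : ∀ a, -f a ∈ Set.Icc (-B) (-A) := fun a ↦ ⟨neg_le_neg (hf a).2, neg_le_neg (hf a).1⟩
  have hupper := measureReal_unifM_pi_sum_sub_ge_le (ι := ι) f hf hε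
  have hlower := measureReal_unifM_pi_sum_sub_ge_le (ι := ι) (fun a ↦ -f a) hneg hε
  rw [show -A - -B = B - A by ring] at hlower
  calc _ ≤ (unifM (ι → α)).real ({ω | ε ≤ ∑ i, (f (ω i) - ∫ a, f a ∂unifM α)} ∪
        {ω | ε ≤ ∑ i, (-f (ω i) - ∫ a, -f a ∂unifM α)}) := by
        refine measureReal_mono (fun ω hω ↦ ?_)
        simp only [integral_neg, sub_neg_eq_add, Set.mem_union, Set.mem_ofPred_eq] at hω ⊢
        rcases le_abs'.1 hω with h | h
        · right
          simpa [Finset.sum_neg_distrib, neg_add_eq_sub] using (le_neg.1 h)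
        · exact Or.inl h
    _ ≤ _ := (measureReal_union_le _ _).trans (by linarith)

lemma measureReal_unifM_pi_abs_estimator_sub_ge_le [Nonempty ι] {A B : ℝ} (f : α → ℝ)
    (hf : ∀ a, f a ∈ Set.Icc A B) {δ : ℝ} (hδ : 0 ≤ δ) :
    (unifM (ι → α)).real
        {ω | δ ≤ |(Fintype.card α : ℝ) / Fintype.card ι * ∑ i, f (ω i) - ∑ a, f a|} ≤
      2 * exp (-(2 * δ ^ 2 * Fintype.card ι /
        ((Fintype.card α : ℝ) ^ 2 * (B - A) ^ 2))) := by
  have hn : (0 : ℝ) < Fintype.card α := Nat.cast_pos.2 Fintype.card_pos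
  have ht : (0 : ℝ) < Fintype.card ι := Nat.cast_pos.2 Fintype.card_pos
  have hevent :
      {ω : ι → α | δ ≤ |(Fintype.card α : ℝ) / Fintype.card ι * ∑ i, f (ω i) - ∑ a, f a|} ⊆
        {ω | δ * Fintype.card ι / Fintype.card α ≤ |∑ i, (f (ω i) - ∫ a, f a ∂unifM α)|} := by
    intro ω hω
    have hsum : ∑ i, (f (ω i) - ∫ a, f a ∂unifM α) = (Fintype.card ι : ℝ) / Fintype.card α *
        ((Fintype.card α : ℝ) / Fintype.card ι * ∑ i, f (ω i) - ∑ a, f a) := by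
      rw [integral_unifM, sum_sub_distrib, sum_const, card_univ, nsmul_eq_mul]
      field_simp
    rw [Set.mem_ofPred_eq, hsum, abs_mul, abs_of_pos (by positivity)]
    calc δ * Fintype.card ι / Fintype.card α = (Fintype.card ι : ℝ) / Fintype.card α * δ := by
          ring
      _ ≤ _ := by gcongr; exact hω
  calc _ ≤ _ := measureReal_mono hevent
    _ ≤ _ := measureReal_unifM_pi_abs_sum_sub_ge_le f hf (by positivity)
    _ = _ := by field_simp

end

lemma two_mul_exp_neg_le_of_one_add_log_one_div_le {γ E : ℝ} (hγ : 0 < γ)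
    (hE : 1 + log (1 / γ) ≤ E) :
    2 * exp (-E) ≤ γ := by
  have hexp : exp (-E) ≤ exp (-1) * γ := by
    calc exp (-E) ≤ exp (-1 + log γ) := exp_le_exp.2 (by rw [one_div, log_inv] at hE; linarith)
      _ = exp (-1) * γ := by rw [exp_add, exp_log hγ]
  have htwo : 2 * exp (-1) ≤ 1 := by
    rw [exp_neg, ← div_eq_mul_inv, div_le_one (exp_pos 1)]
    linarith [add_one_le_exp (1 : ℝ)]
  nlinarith

/-- **importance sampling.** Let `x_1, …, x_r` be real numbers lying in
`[α/b, α·b]` with `α > 0`, `b ≥ 1`, and let `Γ = ∑ x_i`.  Let `γ, ε > 0` and let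
`t ≥ (b⁴/(2ε²))·(1 + ln(1/γ))`.  Choosing `X_1, …, X_t` independently and uniformly
from the list (modeled by a uniform function `ω : Fin t → Fin r`) and setting
`Y = (r/t)·∑ X_i`, we have `Pr[ |Y − Γ| ≥ ε·Γ ] ≤ γ`. -/
theorem stmt12 (r : ℕ) (x : Fin r → ℝ) (α b : ℝ) (hα : 0 < α) (hb : 1 ≤ b)
    (hx : ∀ i, x i ∈ Set.Icc (α / b) (α * b)) (γ ε : ℝ) (hγ : 0 < γ) (hε : 0 < ε)
    (t : ℕ) (ht : b ^ 4 / (2 * ε ^ 2) * (1 + Real.log (1 / γ)) ≤ (t : ℝ)) :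
    unifM (Fin t → Fin r)
        {ω : Fin t → Fin r |
          ε * (∑ i, x i) ≤
            |(r : ℝ) / t * ∑ i : Fin t, x (ω i) - ∑ i, x i|} ≤
      ENNReal.ofReal γ := by
  have hb0 : 0 < b := one_pos.trans_le hb
  have hlog : 1 + log (1 / γ) ≤ 2 * ε ^ 2 * t / b ^ 4 :=
    ((le_div_iff₀' (by positivity)).2 ht).trans_eq (by field_simp)
  rcases Nat.eq_zero_or_pos t with rfl | htpos
  · have : 2 ≤ γ := by
      simpa using two_mul_exp_neg_le_of_one_add_log_one_div_le (E := 0) hγ (hlog.trans_eq (by simp))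
    exact prob_le_one.trans (ENNReal.one_le_ofReal.2 (by linarith))
  rcases Nat.eq_zero_or_pos r with rfl | hrpos
  · have : IsEmpty (Fin t → Fin 0) := ⟨fun ω ↦ (ω ⟨0, htpos⟩).elim0⟩
    simp [Set.eq_empty_of_isEmpty]
  have : NeZero r := ⟨hrpos.ne'⟩
  have : NeZero t := ⟨htpos.ne'⟩
  have hr : (0 : ℝ) < r := Nat.cast_pos.2 hrpos
  have hmean : α / b ≤ (∑ i, x i) / r := by
    rw [le_div_iff₀ hr]
    simpa [mul_comm] using sum_le_sum fun i (_ : i ∈ univ) ↦ (hx i).1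
  have hx0 : ∀ i, x i ∈ Set.Icc 0 (α * b) :=
    fun i ↦ ⟨(by positivity : 0 ≤ α / b).trans (hx i).1, (hx i).2⟩
  rw [← ENNReal.ofReal_toReal (measure_ne_top _ _), ← measureReal_def]
  refine ENNReal.ofReal_le_ofReal ?_
  have hsum : 0 ≤ ε * ∑ i, x i := mul_nonneg hε.le (sum_nonneg fun i _ ↦ (hx0 i).1)
  calc _ ≤ _ := by
        simpa using measureReal_unifM_pi_abs_estimator_sub_ge_le (ι := Fin t) x hx0 hsum
    _ ≤ γ := by
      refine two_mul_exp_neg_le_of_one_add_log_one_div_le hγ (hlog.trans ?_)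
      calc 2 * ε ^ 2 * t / b ^ 4 = 2 * ε ^ 2 * t * (α / b) ^ 2 / (α * b) ^ 2 := by field_simp
        _ ≤ 2 * ε ^ 2 * t * ((∑ i, x i) / r) ^ 2 / (α * b) ^ 2 := by gcongr
        _ = _ := by field_simp
end
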